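/- Let A be a symmetric positive definite real 3×3 matrix and u ∈ ℝ³ a unit vector. Then for all R ∈ SO(3), θ ∈ ℝ, ω ∈ ℝ³ and v ∈ ℝ: ‖D_R(R,θ)·ω + D_θ(R,θ)·v‖ ≤ ‖Ā‖_F·‖ω‖ + (‖Ā‖_F + 2λ_M^Ā)·|v|. -/

import Mathlib

open Matrix

noncomputable section

abbrev M3 : Type := Matrix (Fin 3) (Fin 3) ℝ
abbrev V3 : Type := Fin 3 → ℝ

/-- skew-symmetric matrix associated to `x`: `skew x *ᵥ y = x ×₃ y`. -/
def skew (x : V3) : M3 :=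
  !![0, -x 2, x 1; x 2, 0, -x 0; -x 1, x 0, 0]

/-- the special orthogonal group SO(3) as a subset of 3×3 matrices -/
def SO3 : Set M3 := {R | Rᵀ * R = 1 ∧ R.det = 1}

/-- Rodrigues formula -/
def Ra (θ : ℝ) (u : V3) : M3 :=
  1 + Real.sin θ • skew u + (1 - Real.cos θ) • (skew u * skew u)

/-- `psi M = vec (P_a M)`, the vector part of the antisymmetric projection -/
def psi (M : M3) : V3 :=
  ![(M 2 1 - M 1 2) / 2, (M 0 2 - M 2 0) / 2, (M 1 0 - M 0 1) / 2]

/-- the angular-warping transformation `T(R,θ) = R · Ra(θ,u)` -/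
def Tmap (u : V3) (R : M3) (θ : ℝ) : M3 := R * Ra θ u

/-- the potential function `U(R,θ)` on SO(3) × ℝ -/
def Ufun (A : M3) (u : V3) (γ : ℝ) (R : M3) (θ : ℝ) : ℝ :=
  (A * (1 - Tmap u R θ)).trace + γ / 2 * θ ^ 2

/-- Euclidean norm on ℝ³ -/
def enorm3 (x : V3) : ℝ := Real.sqrt (x ⬝ᵥ x)

/-- Frobenius norm of a 3×3 matrix -/
def fnorm (M : M3) : ℝ := Real.sqrt ((Mᵀ * M).trace)

/-- `E(M) := (tr(M) I − Mᵀ)/2` -/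
def Emap (M : M3) : M3 := (2⁻¹ : ℝ) • (M.trace • (1 : M3) - Mᵀ)

/-- `D_R(R,θ)` from Lemma 2 -/
def DR (A : M3) (u : V3) (R : M3) (θ : ℝ) : M3 :=
  Ra θ u * Emap (A * Tmap u R θ) * (Ra θ u)ᵀ

/-- `D_θ(R,θ)` from Lemma 2 -/
def Dθ (A : M3) (u : V3) (R : M3) (θ : ℝ) : V3 :=
  (Ra θ u * Emap (A * Tmap u R θ)) *ᵥ u - skew (Ra θ u *ᵥ psi (A * Tmap u R θ)) *ᵥ u

/-- Δ(v,u) from the construction of the synergistic gap -/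
def Delta (A : M3) (v u : V3) : ℝ :=
  u ⬝ᵥ ((A.trace • (1 : M3) - A - (2 * (v ⬝ᵥ A *ᵥ v)) • ((1 : M3) - vecMulVec v v)) *ᵥ u)

/-- `v` is a unit eigenvector of `A` -/
def IsUnitEigen (A : M3) (v : V3) : Prop :=
  v ⬝ᵥ v = 1 ∧ ∃ lam : ℝ, A *ᵥ v = lam • v

/-- Ā := (tr(A) I − A)/2 -/
def Abar (A : M3) : M3 := (2⁻¹ : ℝ) • (A.trace • (1 : M3) - A)

/-- `lam` is an eigenvalue of `M` -/
def IsEigen (M : M3) (lam : ℝ) : Prop := ∃ w : V3, w ≠ 0 ∧ M *ᵥ w = lam • w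

/-!
Orthogonal factors do not change Euclidean norms and `‖M x‖ ≤ ‖M‖_F ‖x‖`, so everything reduces
to bounds on `E(A T)` and `ψ(A T)` for the orthogonal matrix `T = R · Ra(θ,u)`. Both rest on
`tr(A N) ≤ c · tr A` whenever `A ⪰ 0` and `y · N y ≤ c ‖y‖²` for all `y`.
In dimension three `‖E(M)‖_F² = (tr(M)² + ‖M‖_F²) / 4`; as `‖A T‖_F = ‖A‖_F` and
`|tr(A T)| ≤ tr A`, this gives `‖E(A T)‖_F ≤ ‖E(A)‖_F = ‖Ā‖_F`.
For `x = ψ(A T)` we have `‖x‖² = ½ tr(A T (x^×)ᵀ)`, and `N = T (x^×)ᵀ` satisfies the hypothesis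
with `c = ‖x‖`, so `‖ψ(A T)‖ ≤ tr A / 2`. Finally `tr A = tr Ā ≤ 3 λ_M^Ā`, hence
`tr A / 2 ≤ 2 λ_M^Ā`.
-/

lemma Matrix.PosSemidef.trace_mul_le {n : Type*} [Fintype n] {A N : Matrix n n ℝ}
    (hA : A.PosSemidef) {c : ℝ} (hN : ∀ x, x ⬝ᵥ (N *ᵥ x) ≤ c * (x ⬝ᵥ x)) :
    (A * N).trace ≤ c * A.trace := by
  obtain ⟨m, v, rfl⟩ := posSemidef_iff_eq_sum_vecMulVec.mp hA
  simp only [Finset.sum_mul, trace_sum, Finset.mul_sum, vecMulVec_mul, trace_vecMulVec,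
    star_trivial]
  refine Finset.sum_le_sum fun i _ => ?_
  rw [dotProduct_comm, ← dotProduct_mulVec]
  exact hN (v i)

lemma Matrix.IsHermitian.trace_le_card_mul {n : Type*} [Fintype n] [DecidableEq n]
    {M : Matrix n n ℝ} (hM : M.IsHermitian) {c : ℝ}
    (hc : ∀ lam (w : n → ℝ), w ≠ 0 → M *ᵥ w = lam • w → lam ≤ c) :
    M.trace ≤ Fintype.card n * c := by
  rw [hM.trace_eq_sum_eigenvalues]
  simpa using Finset.sum_le_sum fun i (_ : i ∈ Finset.univ) =>
    hc _ _ ((WithLp.ofLp_eq_zero 2).ne.2 <| hM.eigenvectorBasis.orthonormal.ne_zero i)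
      (hM.mulVec_eigenvectorBasis i)

lemma Matrix.PosSemidef.transpose_eq {n : Type*} [Fintype n] {A : Matrix n n ℝ}
    (hA : A.PosSemidef) : Aᵀ = A := by
  simpa using hA.isHermitian.eq

lemma dotProduct_self_nonneg {n : Type*} [Fintype n] (x : n → ℝ) : 0 ≤ x ⬝ᵥ x :=
  Finset.sum_nonneg fun i _ => mul_self_nonneg (x i)

lemma enorm3_eq_norm (x : V3) : enorm3 x = ‖WithLp.toLp 2 x‖ := by
  rw [norm_eq_sqrt_real_inner, EuclideanSpace.inner_eq_star_dotProduct]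
  simp [enorm3]

lemma enorm3_nonneg (x : V3) : 0 ≤ enorm3 x := Real.sqrt_nonneg _

lemma enorm3_sq (x : V3) : enorm3 x ^ 2 = x ⬝ᵥ x := Real.sq_sqrt (dotProduct_self_nonneg x)

lemma enorm3_add_le (x y : V3) : enorm3 (x + y) ≤ enorm3 x + enorm3 y := by
  simpa only [enorm3_eq_norm, WithLp.toLp_add] using norm_add_le _ _

lemma enorm3_sub_le (x y : V3) : enorm3 (x - y) ≤ enorm3 x + enorm3 y := by
  simpa only [enorm3_eq_norm, WithLp.toLp_sub] using norm_sub_le _ _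

lemma enorm3_smul (c : ℝ) (x : V3) : enorm3 (c • x) = |c| * enorm3 x := by
  simp only [enorm3_eq_norm, WithLp.toLp_smul, norm_smul, Real.norm_eq_abs]

lemma dotProduct_le_enorm3_mul (x y : V3) : x ⬝ᵥ y ≤ enorm3 x * enorm3 y := by
  simpa only [enorm3_eq_norm, EuclideanSpace.inner_eq_star_dotProduct, star_trivial,
    dotProduct_comm y] using real_inner_le_norm (WithLp.toLp 2 x) (WithLp.toLp 2 y)

lemma enorm3_mulVec_of_orthogonal {T : M3} (hT : Tᵀ * T = 1) (x : V3) :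
    enorm3 (T *ᵥ x) = enorm3 x := by
  rw [enorm3, enorm3, dotProduct_mulVec, ← mulVec_transpose, mulVec_mulVec, hT, one_mulVec]

open scoped Matrix.Norms.Frobenius in
lemma fnorm_eq_norm (M : M3) : fnorm M = ‖M‖ := by
  rw [frobenius_norm_def, ← Real.sqrt_eq_rpow, fnorm, trace, Finset.sum_comm]
  simp [mul_apply, sq]

open scoped Matrix.Norms.Frobenius in
lemma enorm3_mulVec_le (M : M3) (x : V3) : enorm3 (M *ᵥ x) ≤ fnorm M * enorm3 x := by
  simpa only [enorm3_eq_norm, fnorm_eq_norm, ← frobenius_norm_replicateCol (ι := Unit),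
    replicateCol_mulVec] using frobenius_norm_mul M (replicateCol Unit x)

lemma skew_mulVec (x y : V3) : skew x *ᵥ y = x ⨯₃ y := by
  ext i; fin_cases i <;> simp [skew, cross_apply, mulVec, dotProduct, Fin.sum_univ_three] <;> ring

lemma enorm3_skew_mulVec_le (x y : V3) : enorm3 (skew x *ᵥ y) ≤ enorm3 x * enorm3 y := by
  have h : (x ⨯₃ y) ⬝ᵥ (x ⨯₃ y) ≤ (x ⬝ᵥ x) * (y ⬝ᵥ y) := by
    rw [cross_dot_cross, dotProduct_comm y x]; nlinarith [sq_nonneg (x ⬝ᵥ y)]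
  rw [skew_mulVec, enorm3, enorm3, enorm3, ← Real.sqrt_mul (dotProduct_self_nonneg x)]
  exact Real.sqrt_le_sqrt h

lemma skew_transpose (x : V3) : (skew x)ᵀ = -skew x := by
  ext i j; fin_cases i <;> fin_cases j <;> simp [skew]

lemma skew_mul_skew_mul_skew (x : V3) : skew x * skew x * skew x = -(x ⬝ᵥ x) • skew x := by
  ext i j; fin_cases i <;> fin_cases j <;>
    simp [skew, mul_apply, Fin.sum_univ_three, dotProduct] <;> ring

lemma Ra_zero (u : V3) : Ra 0 u = 1 := by simp [Ra]

lemma Ra_transpose (θ : ℝ) (u : V3) : (Ra θ u)ᵀ = Ra (-θ) u := by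
  simp only [Ra, transpose_add, transpose_one, transpose_smul, transpose_mul, skew_transpose,
    Real.sin_neg, Real.cos_neg, neg_mul_neg, smul_neg, neg_smul]

lemma Ra_mul_Ra {u : V3} (hu : u ⬝ᵥ u = 1) (α β : ℝ) : Ra α u * Ra β u = Ra (α + β) u := by
  have hK3 := skew_mul_skew_mul_skew u
  rw [hu, neg_smul, one_smul] at hK3
  have hK3' : skew u * (skew u * skew u) = -skew u := by rw [← mul_assoc, hK3]
  have hK4 : skew u * skew u * (skew u * skew u) = -(skew u * skew u) := by
    rw [← mul_assoc, hK3, neg_mul]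
  simp only [Ra, Real.sin_add, Real.cos_add, add_mul, mul_add, one_mul, mul_one, smul_mul_assoc,
    mul_smul_comm, hK3, hK3', hK4, smul_neg]
  module

lemma Ra_transpose_mul_self {u : V3} (hu : u ⬝ᵥ u = 1) (θ : ℝ) : (Ra θ u)ᵀ * Ra θ u = 1 := by
  rw [Ra_transpose, Ra_mul_Ra hu, neg_add_cancel, Ra_zero]

lemma Ra_mul_transpose_self {u : V3} (hu : u ⬝ᵥ u = 1) (θ : ℝ) : Ra θ u * (Ra θ u)ᵀ = 1 := by
  rw [Ra_transpose, Ra_mul_Ra hu, add_neg_cancel, Ra_zero]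

lemma abs_trace_mul_orthogonal_le {A T : M3} (hA : A.PosSemidef) (hT : Tᵀ * T = 1) :
    |(A * T).trace| ≤ A.trace := by
  have hN : ∀ N : M3, Nᵀ * N = 1 → ∀ x, x ⬝ᵥ (N *ᵥ x) ≤ 1 * (x ⬝ᵥ x) := fun N hN x =>
    calc x ⬝ᵥ (N *ᵥ x) ≤ enorm3 x * enorm3 (N *ᵥ x) := dotProduct_le_enorm3_mul x _
      _ = 1 * (x ⬝ᵥ x) := by rw [enorm3_mulVec_of_orthogonal hN, ← sq, enorm3_sq, one_mul]
  have hneg : (-T)ᵀ * -T = 1 := by rw [transpose_neg, neg_mul_neg, hT]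
  have h₁ := hA.trace_mul_le (hN T hT)
  have h₂ := hA.trace_mul_le (hN (-T) hneg)
  rw [mul_neg, trace_neg] at h₂
  exact abs_le.mpr ⟨by linarith, by linarith⟩

lemma trace_transpose_Emap_mul_Emap (M : M3) :
    ((Emap M)ᵀ * Emap M).trace = (M.trace ^ 2 + (M * Mᵀ).trace) / 4 := by
  simp [Emap, trace, Fin.sum_univ_three, mul_apply, one_apply]
  ring

lemma fnorm_Emap_mul_orthogonal_le {A T : M3} (hA : A.PosSemidef) (hT : Tᵀ * T = 1) :
    fnorm (Emap (A * T)) ≤ fnorm (Abar A) := by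
  have hAT : A * T * (A * T)ᵀ = A * Aᵀ := by
    rw [transpose_mul, mul_assoc, ← mul_assoc T, mul_eq_one_comm.mp hT, one_mul]
  have htr : (A * T).trace ^ 2 ≤ A.trace ^ 2 :=
    sq_le_sq' (abs_le.mp (abs_trace_mul_orthogonal_le hA hT)).1
      (abs_le.mp (abs_trace_mul_orthogonal_le hA hT)).2
  have hAbar : Abar A = Emap A := by rw [Abar, Emap, hA.transpose_eq]
  rw [fnorm, fnorm, hAbar, trace_transpose_Emap_mul_Emap, trace_transpose_Emap_mul_Emap, hAT]
  gcongr

lemma psi_dotProduct (M : M3) (x : V3) : psi M ⬝ᵥ x = 2⁻¹ * (M * (skew x)ᵀ).trace := by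
  simp [psi, skew, dotProduct, Fin.sum_univ_three, trace, mul_apply]
  ring

lemma enorm3_psi_mul_orthogonal_le {A T : M3} (hA : A.PosSemidef) (hT : Tᵀ * T = 1) :
    enorm3 (psi (A * T)) ≤ A.trace / 2 := by
  set p := psi (A * T)
  have hN : ∀ x, x ⬝ᵥ ((T * (skew p)ᵀ) *ᵥ x) ≤ enorm3 p * (x ⬝ᵥ x) := fun x => by
    rw [← mulVec_mulVec, skew_transpose, neg_mulVec, skew_mulVec, cross_anticomm,
      ← skew_mulVec, ← enorm3_sq, sq]
    calc x ⬝ᵥ (T *ᵥ (skew x *ᵥ p)) ≤ enorm3 x * enorm3 (skew x *ᵥ p) := by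
          rw [← enorm3_mulVec_of_orthogonal hT (skew x *ᵥ p)]
          exact dotProduct_le_enorm3_mul x _
      _ ≤ enorm3 x * (enorm3 x * enorm3 p) := by
          gcongr
          · exact enorm3_nonneg x
          · exact enorm3_skew_mulVec_le x p
      _ = enorm3 p * (enorm3 x * enorm3 x) := by ring
  have hp : enorm3 p ^ 2 ≤ enorm3 p * (A.trace / 2) := by
    rw [enorm3_sq, psi_dotProduct, mul_assoc]
    linarith [hA.trace_mul_le hN]
  nlinarith [enorm3_nonneg p, hA.trace_nonneg]

lemma trace_le_three_mul_of_eigen_Abar_le {A : M3} (hA : A.PosSemidef) {lamM : ℝ}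
    (hbound : ∀ lam : ℝ, IsEigen (Abar A) lam → lam ≤ lamM) :
    A.trace ≤ 3 * lamM := by
  have hsymm : (Abar A).IsHermitian := by
    rw [IsHermitian, conjTranspose_eq_transpose_of_trivial, Abar, transpose_smul, transpose_sub,
      transpose_smul, transpose_one, hA.transpose_eq]
  have htr : (Abar A).trace = A.trace := by
    simp only [Abar, trace_smul, trace_sub, trace_one, Fintype.card_fin, smul_eq_mul]
    ring
  simpa [htr] using hsymm.trace_le_card_mul fun lam w hw h => hbound lam ⟨w, hw, h⟩

lemma Tmap_transpose_mul_self {u : V3} (hu : u ⬝ᵥ u = 1) {R : M3} (hR : R ∈ SO3) (θ : ℝ) :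
    (Tmap u R θ)ᵀ * Tmap u R θ = 1 := by
  rw [Tmap, transpose_mul, mul_assoc, ← mul_assoc Rᵀ, hR.1, one_mul, Ra_transpose_mul_self hu]

lemma enorm3_DR_mulVec_le {A : M3} (hA : A.PosSemidef) {u : V3} (hu : u ⬝ᵥ u = 1) {R : M3}
    (hR : R ∈ SO3) (θ : ℝ) (ω : V3) :
    enorm3 (DR A u R θ *ᵥ ω) ≤ fnorm (Abar A) * enorm3 ω := by
  have hRaT : ((Ra θ u)ᵀ)ᵀ * (Ra θ u)ᵀ = 1 := by
    rw [transpose_transpose, Ra_mul_transpose_self hu]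
  rw [DR, ← mulVec_mulVec, ← mulVec_mulVec,
    enorm3_mulVec_of_orthogonal (Ra_transpose_mul_self hu θ)]
  calc _ ≤ fnorm (Emap (A * Tmap u R θ)) * enorm3 ((Ra θ u)ᵀ *ᵥ ω) := enorm3_mulVec_le _ _
    _ ≤ fnorm (Abar A) * enorm3 ω := by
      rw [enorm3_mulVec_of_orthogonal hRaT]
      exact mul_le_mul_of_nonneg_right
        (fnorm_Emap_mul_orthogonal_le hA (Tmap_transpose_mul_self hu hR θ)) (enorm3_nonneg ω)

lemma enorm3_Dθ_le {A : M3} (hA : A.PosSemidef) {u : V3} (hu : u ⬝ᵥ u = 1) {lamM : ℝ}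
    (hbound : ∀ lam : ℝ, IsEigen (Abar A) lam → lam ≤ lamM) {R : M3} (hR : R ∈ SO3) (θ : ℝ) :
    enorm3 (Dθ A u R θ) ≤ fnorm (Abar A) + 2 * lamM := by
  have hT := Tmap_transpose_mul_self hu hR θ
  have hRa := Ra_transpose_mul_self hu θ
  have hu1 : enorm3 u = 1 := by rw [enorm3, hu, Real.sqrt_one]
  have hE : enorm3 ((Ra θ u * Emap (A * Tmap u R θ)) *ᵥ u) ≤ fnorm (Abar A) := by
    rw [← mulVec_mulVec, enorm3_mulVec_of_orthogonal hRa]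
    calc _ ≤ fnorm (Emap (A * Tmap u R θ)) * enorm3 u := enorm3_mulVec_le _ _
      _ ≤ fnorm (Abar A) := by rw [hu1, mul_one]; exact fnorm_Emap_mul_orthogonal_le hA hT
  have hψ : enorm3 (skew (Ra θ u *ᵥ psi (A * Tmap u R θ)) *ᵥ u) ≤ 2 * lamM := by
    calc _ ≤ enorm3 (Ra θ u *ᵥ psi (A * Tmap u R θ)) * enorm3 u := enorm3_skew_mulVec_le _ _
      _ ≤ A.trace / 2 := by
        rw [hu1, mul_one, enorm3_mulVec_of_orthogonal hRa]
        exact enorm3_psi_mul_orthogonal_le hA hT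
      _ ≤ 2 * lamM := by linarith [trace_le_three_mul_of_eigen_Abar_le hA hbound, hA.trace_nonneg]
  exact (enorm3_sub_le _ _).trans (add_le_add hE hψ)

theorem D_terms_bound_general
    (A : M3) (hA : A.PosDef) (u : V3) (hu : u ⬝ᵥ u = 1)
    (lamM : ℝ)
    (hbound : ∀ lam : ℝ, IsEigen (Abar A) lam → lam ≤ lamM) :
    ∀ R ∈ SO3, ∀ θ : ℝ, ∀ ω : V3, ∀ v : ℝ,
      enorm3 (DR A u R θ *ᵥ ω + v • Dθ A u R θ) ≤
        fnorm (Abar A) * enorm3 ω + (fnorm (Abar A) + 2 * lamM) * |v| := by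
  intro R hR θ ω v
  calc _ ≤ enorm3 (DR A u R θ *ᵥ ω) + |v| * enorm3 (Dθ A u R θ) := by
        rw [← enorm3_smul]; exact enorm3_add_le _ _
    _ ≤ fnorm (Abar A) * enorm3 ω + |v| * (fnorm (Abar A) + 2 * lamM) := by
        gcongr
        · exact enorm3_DR_mulVec_le hA.posSemidef hu hR θ ω
        · exact enorm3_Dθ_le hA.posSemidef hu hbound hR θ
    _ = fnorm (Abar A) * enorm3 ω + (fnorm (Abar A) + 2 * lamM) * |v| := by ring

theorem D_terms_bound
    (A : M3) (hA : A.PosDef) (u : V3) (hu : u ⬝ᵥ u = 1)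
    (lamM : ℝ) (hM : IsEigen (Abar A) lamM)
    (hbound : ∀ lam : ℝ, IsEigen (Abar A) lam → lam ≤ lamM) :
    ∀ R ∈ SO3, ∀ θ : ℝ, ∀ ω : V3, ∀ v : ℝ,
      enorm3 (DR A u R θ *ᵥ ω + v • Dθ A u R θ) ≤
        fnorm (Abar A) * enorm3 ω + (fnorm (Abar A) + 2 * lamM) * |v| :=
  D_terms_bound_general A hA u hu lamM hbound
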